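/- Let G be a finite group. If a and b are distinct elements adjacent in the enhanced power graph P_e(G), i.e., a, b ∈ ⟨c⟩ for some c, then in the non-cyclic case N_c ≥ max{N_a, N_b} and c is adjacent in the power graph to both a and b. -/

import Mathlib

def padj {G : Type*} [Group G] (a b : G) : Prop :=
  a ≠ b ∧ (Subgroup.zpowers a ≤ Subgroup.zpowers b ∨ Subgroup.zpowers b ≤ Subgroup.zpowers a)

def pnbhd {G : Type*} [Group G] (a : G) : Set G := {x | padj a x}

def closedTwins {G : Type*} [Group G] (a : G) : Set G :=
  {b | padj a b ∧ pnbhd a \ {b} = pnbhd b \ {a}}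

noncomputable def Ncount {G : Type*} [Group G] (a : G) : ℕ := (closedTwins a).ncard + 1

def eadj {G : Type*} [Group G] (a b : G) : Prop :=
  a ≠ b ∧ ∃ c : G, a ∈ Subgroup.zpowers c ∧ b ∈ Subgroup.zpowers c

/-!
Two elements are closed twins in the power graph exactly when they have the same closed
neighbourhood, so `N_x` is the size of the twin class of `x`. In a non-cyclic group, if `x` and
`y` are twins with `⟨x⟩ < ⟨y⟩`, then `|y|` is a prime power (for `x = 1` apply this to an element
outside `⟨y⟩`); hence the subgroups of `⟨y⟩` form a chain, and twin classes are convex along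
inclusions of cyclic subgroups.

Let `a ∈ ⟨c⟩` with `a`, `c` not twins, and let `t` have maximal order in the class of `a`. The
class lies in `⟨t⟩`, and convexity forces `⟨t⟩ < ⟨c⟩`. If the class consists of generators of
`⟨t⟩` it has at most `φ |t| ≤ φ |c|` elements; otherwise `|t| = p ^ r` and `|c|` is a power of
`p` too, so the class has at most `p ^ r ≤ φ |c|` elements. The `φ |c|` generators of `⟨c⟩` are
twins of `c`.
-/

open Subgroup

theorem Nat.isPrimePow_of_forall_dvd_comparable {m n : ℕ} (hm : 1 < m) (hmn : m ∣ n)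
    (hne : m ≠ n) (H : ∀ d, d ∣ n → d ∣ m ∨ m ∣ d) : IsPrimePow n := by
  have hn : n ≠ 0 := by
    rintro rfl
    rcases H (m + 1) (dvd_zero _) with h | h
    · exact absurd (Nat.le_of_dvd (by omega) h) (by omega)
    · exact absurd (Nat.le_of_dvd one_pos ((Nat.dvd_add_right dvd_rfl).mp h)) (by omega)
  by_contra hpp
  -- `n = u * v` with coprime `u, v ≠ 1`, and `m > 1` cannot be comparable with both
  have hp := Nat.minFac_prime (show n ≠ 1 by rintro rfl; exact hm.ne' (Nat.dvd_one.mp hmn))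
  set p := n.minFac
  set u := p ^ n.factorization p
  set v := n / u
  have huv : u * v = n := Nat.ordProj_mul_ordCompl_eq_self n p
  have hcop : Nat.Coprime u v := (Nat.coprime_ordCompl hp hn).pow_left _
  have hk : 0 < n.factorization p := (hp.dvd_iff_one_le_factorization hn).mp (Nat.minFac_dvd n)
  have hu : u ≠ 1 := (Nat.one_lt_pow hk.ne' hp.one_lt).ne'
  have hv : v ≠ 1 := fun hv ↦
    hpp ((isPrimePow_nat_iff n).mpr ⟨p, _, hp, hk, by simpa [hv] using huv⟩)
  rcases H u ⟨v, huv.symm⟩ with hum | hmu <;> rcases H v ⟨u, by rw [← huv, mul_comm]⟩ with hvm | hmv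
  · exact hne (Nat.dvd_antisymm hmn (huv ▸ hcop.mul_dvd_of_dvd_of_dvd hum hvm))
  · exact hu (Nat.Coprime.eq_one_of_dvd hcop (hum.trans hmv))
  · exact hv (Nat.Coprime.eq_one_of_dvd hcop.symm (hvm.trans hmu))
  · exact hm.ne' (Nat.eq_one_of_dvd_coprimes hcop hmu hmv)

theorem Nat.le_totient_of_dvd_of_lt {m n : ℕ} (hn : IsPrimePow n) (hmn : m ∣ n) (hlt : m < n) :
    m ≤ n.totient := by
  obtain ⟨p, k, hp, hk, rfl⟩ := (isPrimePow_nat_iff n).mp hn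
  obtain ⟨i, -, rfl⟩ := (Nat.dvd_prime_pow hp).mp hmn
  obtain ⟨j, rfl⟩ := Nat.exists_eq_add_one_of_ne_zero hk.ne'
  have hij : i ≤ j := Nat.lt_succ_iff.mp ((Nat.pow_lt_pow_iff_right hp.one_lt).mp hlt)
  rw [Nat.totient_prime_pow_succ hp]
  calc p ^ i ≤ p ^ j := Nat.pow_le_pow_right hp.pos hij
    _ ≤ p ^ j * (p - 1) := Nat.le_mul_of_pos_right _ (Nat.sub_pos_of_lt hp.one_lt)

theorem IsCyclic.mem_zpowers_of_orderOf_dvd {α : Type*} [Group α] [Finite α] [IsCyclic α]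
    {x y : α} (h : orderOf x ∣ orderOf y) : x ∈ zpowers y := by
  classical
  have := Fintype.ofFinite α
  -- `⟨y⟩` already supplies `|y|` solutions of `g ^ |y| = 1`, the most a cyclic group has
  set S : Finset α := {g | g ^ orderOf y = 1}
  have hsub : (zpowers y : Set α).toFinset ⊆ S := fun g hg ↦ by
    rw [Set.mem_toFinset, SetLike.mem_coe] at hg
    simpa [S] using orderOf_dvd_iff_pow_eq_one.mp (orderOf_dvd_of_mem_zpowers hg)
  have hcard : S.card ≤ (zpowers y : Set α).toFinset.card := by
    rw [Set.toFinset_card, ← Nat.card_eq_fintype_card, SetLike.coe_sort_coe, Nat.card_zpowers]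
    exact IsCyclic.card_pow_eq_one_le (orderOf_pos y)
  have hx : x ∈ S := by simpa [S] using orderOf_dvd_iff_pow_eq_one.mp h
  rw [← Finset.eq_of_subset_of_card_le hsub hcard] at hx
  simpa using hx

theorem IsCyclic.ncard_orderOf_eq_totient {α : Type*} [Group α] [Finite α] [IsCyclic α] :
    {x : α | orderOf x = Nat.card α}.ncard = (Nat.card α).totient := by
  classical
  have := Fintype.ofFinite α
  rw [Nat.card_eq_fintype_card, ← IsCyclic.card_orderOf_eq_totient dvd_rfl, ← Set.ncard_coe_finset]
  simp

theorem Subgroup.ncard_setOf_mem_and {G : Type*} [Group G] (H : Subgroup G) (p : G → Prop) :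
    {g | g ∈ H ∧ p g}.ncard = {h : H | p h}.ncard := by
  rw [← Set.ncard_image_of_injective _ Subtype.val_injective]
  congr 1
  ext g
  simp [and_comm]

section

variable {G : Type*} [Group G] [Finite G]

theorem zpowers_eq_of_le_of_orderOf_le {x y : G} (h : zpowers x ≤ zpowers y)
    (hord : orderOf y ≤ orderOf x) : zpowers x = zpowers y :=
  eq_of_le_of_card_ge h (by rwa [Nat.card_zpowers, Nat.card_zpowers])

theorem orderOf_lt_orderOf_of_zpowers_lt {x y : G} (h : zpowers x < zpowers y) :
    orderOf x < orderOf y :=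
  lt_of_not_ge fun hle ↦ h.ne (zpowers_eq_of_le_of_orderOf_le h.le hle)

theorem mem_zpowers_of_orderOf_dvd {c x y : G} (hx : x ∈ zpowers c) (hy : y ∈ zpowers c)
    (h : orderOf x ∣ orderOf y) : x ∈ zpowers y := by
  have hmem : (⟨x, hx⟩ : zpowers c) ∈ zpowers ⟨y, hy⟩ :=
    IsCyclic.mem_zpowers_of_orderOf_dvd (by simpa only [orderOf_mk] using h)
  have := mem_map_of_mem (zpowers c).subtype hmem
  rwa [MonoidHom.map_zpowers] at this

theorem zpowers_eq_iff_mem_and_orderOf_eq {x c : G} :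
    zpowers x = zpowers c ↔ x ∈ zpowers c ∧ orderOf x = orderOf c := by
  refine ⟨fun h ↦ ⟨h ▸ mem_zpowers x, by rw [← Nat.card_zpowers, h, Nat.card_zpowers]⟩,
    fun ⟨hx, hord⟩ ↦ zpowers_eq_of_le_of_orderOf_le (zpowers_le.mpr hx) hord.ge⟩

theorem ncard_setOf_zpowers_eq (c : G) :
    {x | zpowers x = zpowers c}.ncard = (orderOf c).totient := by
  simp_rw [zpowers_eq_iff_mem_and_orderOf_eq, ncard_setOf_mem_and, ← Nat.card_zpowers c,
    orderOf_coe]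
  exact IsCyclic.ncard_orderOf_eq_totient

theorem exists_mem_zpowers_orderOf_eq {c : G} {d : ℕ} (hd : d ∣ orderOf c) :
    ∃ z ∈ zpowers c, orderOf z = d :=
  ⟨c ^ (orderOf c / d), pow_mem (mem_zpowers c) _, orderOf_pow_orderOf_div (orderOf_pos c).ne' hd⟩

end

section PowerGraph

variable {G : Type*} [Group G]

def pclosedNbhd (x : G) : Set G := {w | zpowers x ≤ zpowers w ∨ zpowers w ≤ zpowers x}

def twinClass (x : G) : Set G := {y | pclosedNbhd y = pclosedNbhd x}

theorem mem_pclosedNbhd_self (x : G) : x ∈ pclosedNbhd x := Or.inl le_rfl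

theorem pnbhd_eq_pclosedNbhd_diff (x : G) : pnbhd x = pclosedNbhd x \ {x} := by
  ext w
  simp only [pnbhd, padj, pclosedNbhd, Set.mem_ofPred_eq, Set.mem_sdiff, Set.mem_singleton_iff]
  exact ⟨fun ⟨hne, h⟩ ↦ ⟨h, Ne.symm hne⟩, fun ⟨h, hne⟩ ↦ ⟨Ne.symm hne, h⟩⟩

theorem closedTwins_eq_twinClass_diff (x : G) : closedTwins x = twinClass x \ {x} := by
  ext y
  simp only [closedTwins, twinClass, pnbhd_eq_pclosedNbhd_diff, Set.sdiff_sdiff, Set.mem_ofPred_eq,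
    Set.mem_sdiff, Set.mem_singleton_iff, Set.union_comm {y}]
  constructor
  · rintro ⟨⟨hne, hxy⟩, h⟩
    have hx : {x} ∪ {y} ⊆ pclosedNbhd x := by
      simpa [Set.insert_subset_iff] using ⟨hxy, mem_pclosedNbhd_self x⟩
    have hy : {x} ∪ {y} ⊆ pclosedNbhd y := by
      simpa [Set.insert_subset_iff] using ⟨mem_pclosedNbhd_self y, hxy.symm⟩
    refine ⟨?_, Ne.symm hne⟩
    rw [← Set.sdiff_union_of_subset hx, ← Set.sdiff_union_of_subset hy, h]
  · rintro ⟨h, hne⟩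
    refine ⟨⟨Ne.symm hne, ?_⟩, by rw [h]⟩
    show y ∈ pclosedNbhd x
    exact h ▸ mem_pclosedNbhd_self y

theorem pclosedNbhd_congr {x y : G} (h : zpowers x = zpowers y) :
    pclosedNbhd x = pclosedNbhd y := by
  simp only [pclosedNbhd, h]

theorem pclosedNbhd_one : pclosedNbhd (1 : G) = Set.univ :=
  Set.eq_univ_of_forall fun w ↦ Or.inl (by simp)

section Finite

variable [Finite G]

theorem Ncount_eq_ncard_twinClass (x : G) : Ncount x = (twinClass x).ncard := by
  rw [Ncount, closedTwins_eq_twinClass_diff]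
  exact Set.ncard_sdiff_singleton_add_one rfl (Set.toFinite _)

theorem mem_pclosedNbhd_of_isPrimePow {y u v : G} (hy : IsPrimePow (orderOf y))
    (hu : u ∈ zpowers y) (hv : v ∈ zpowers y) : v ∈ pclosedNbhd u := by
  obtain ⟨p, k, hp, -, hk⟩ := (isPrimePow_nat_iff _).mp hy
  have hdvd {w : G} (hw : w ∈ zpowers y) : orderOf w ∣ p ^ k := hk ▸ orderOf_dvd_of_mem_zpowers hw
  obtain ⟨i, -, hi⟩ := (Nat.dvd_prime_pow hp).mp (hdvd hu)
  obtain ⟨j, -, hj⟩ := (Nat.dvd_prime_pow hp).mp (hdvd hv)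
  rcases le_total i j with h | h
  · exact Or.inl <| zpowers_le.mpr <|
      mem_zpowers_of_orderOf_dvd hu hv (by rw [hi, hj]; exact pow_dvd_pow p h)
  · exact Or.inr <| zpowers_le.mpr <|
      mem_zpowers_of_orderOf_dvd hv hu (by rw [hi, hj]; exact pow_dvd_pow p h)

theorem isPrimePow_orderOf_of_zpowers_subset {x y : G} (hx : 1 < orderOf x)
    (hxy : zpowers x < zpowers y) (hsub : (zpowers y : Set G) ⊆ pclosedNbhd x) :
    IsPrimePow (orderOf y) := by
  refine Nat.isPrimePow_of_forall_dvd_comparable hx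
    (orderOf_dvd_of_mem_zpowers (zpowers_le.mp hxy.le)) (orderOf_lt_orderOf_of_zpowers_lt hxy).ne
    fun d hd ↦ ?_
  obtain ⟨z, hz, rfl⟩ := exists_mem_zpowers_orderOf_eq hd
  rcases hsub hz with h | h
  · exact Or.inr (orderOf_dvd_of_mem_zpowers (h (mem_zpowers x)))
  · exact Or.inl (orderOf_dvd_of_mem_zpowers (h (mem_zpowers z)))

theorem isPrimePow_orderOf_of_pclosedNbhd_eq (hnc : ¬ IsCyclic G) {x y : G}
    (hN : pclosedNbhd x = pclosedNbhd y) (hxy : zpowers x < zpowers y) :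
    IsPrimePow (orderOf y) := by
  by_cases hx : x = 1
  · subst hx
    obtain ⟨g, hg⟩ : ∃ g, g ∉ zpowers y := by
      by_contra! h
      exact hnc ⟨⟨y, h⟩⟩
    have hyg : zpowers y < zpowers g := by
      have hgy : g ∈ pclosedNbhd y := by rw [← hN, pclosedNbhd_one]; trivial
      rcases hgy with h | h
      · exact h.lt_of_ne fun e ↦ hg (e ▸ mem_zpowers g)
      · exact absurd (h (mem_zpowers g)) hg
    have hy : 1 < orderOf y := by simpa using orderOf_lt_orderOf_of_zpowers_lt hxy
    refine (isPrimePow_orderOf_of_zpowers_subset hy hyg fun w _ ↦ ?_).dvd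
      (orderOf_dvd_of_mem_zpowers (zpowers_le.mp hyg.le)) hy.ne'
    rw [← hN, pclosedNbhd_one]
    trivial
  · refine isPrimePow_orderOf_of_zpowers_subset ?_ hxy fun z hz ↦ hN ▸ Or.inr (zpowers_le.mpr hz)
    exact Nat.lt_of_le_of_ne (orderOf_pos x) (by rwa [eq_comm, orderOf_eq_one_iff])

theorem pclosedNbhd_eq_of_zpowers_le_of_le (hnc : ¬ IsCyclic G) {x y c : G}
    (hN : pclosedNbhd x = pclosedNbhd y) (hxc : zpowers x ≤ zpowers c)
    (hcy : zpowers c ≤ zpowers y) : pclosedNbhd c = pclosedNbhd x := by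
  rcases (hxc.trans hcy).eq_or_lt with hxy | hxy
  · exact pclosedNbhd_congr (le_antisymm (hcy.trans hxy.ge) hxc)
  have hy := isPrimePow_orderOf_of_pclosedNbhd_eq hnc hN hxy
  have hcy' : c ∈ zpowers y := zpowers_le.mp hcy
  ext w
  constructor
  · rintro (h | h)
    · exact Or.inl (hxc.trans h)
    · exact mem_pclosedNbhd_of_isPrimePow hy (zpowers_le.mp (hxc.trans hcy))
        (zpowers_le.mp (h.trans hcy))
  · rw [hN]
    rintro (h | h)
    · exact Or.inl (hcy.trans h)
    · exact mem_pclosedNbhd_of_isPrimePow hy hcy' (zpowers_le.mp h)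

theorem twinClass_subset_zpowers {a t : G} (ht : MaximalFor (· ∈ twinClass a) orderOf t) :
    twinClass a ⊆ zpowers t := by
  intro y hy
  have hyt : y ∈ pclosedNbhd t := by
    rw [ht.prop, ← hy]
    exact mem_pclosedNbhd_self y
  rcases hyt with h | h
  · have hle : orderOf t ≤ orderOf y :=
      Nat.le_of_dvd (orderOf_pos y) (orderOf_dvd_of_mem_zpowers (h (mem_zpowers t)))
    rw [SetLike.mem_coe, zpowers_eq_of_le_of_orderOf_le h (ht.2 hy hle)]
    exact mem_zpowers y
  · exact h (mem_zpowers y)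

theorem isPrimePow_orderOf_of_zpowers_le (hnc : ¬ IsCyclic G) {y t c : G}
    (hN : pclosedNbhd y = pclosedNbhd t) (hyt : zpowers y < zpowers t)
    (htc : zpowers t ≤ zpowers c) : IsPrimePow (orderOf c) := by
  obtain ⟨p, r, hp, hr, hpr⟩ :=
    (isPrimePow_nat_iff _).mp (isPrimePow_orderOf_of_pclosedNbhd_eq hnc hN hyt)
  have hyc : y ∈ zpowers c := zpowers_le.mp (hyt.le.trans htc)
  have hy : orderOf y ∣ p ^ r := hpr ▸ orderOf_dvd_of_mem_zpowers (zpowers_le.mp hyt.le)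
  have hylt : orderOf y < p ^ r := hpr ▸ orderOf_lt_orderOf_of_zpowers_lt hyt
  suffices h : ∀ q, q.Prime → q ∣ orderOf c → q = p from
    isPrimePow_iff_unique_prime_dvd.mpr ⟨p, ⟨hp, (dvd_pow_self p hr.ne').trans
      (hpr ▸ orderOf_dvd_of_mem_zpowers (zpowers_le.mp htc))⟩, fun q hq ↦ h q hq.1 hq.2⟩
  intro q hq hqc
  by_contra hqp
  have hcop : Nat.Coprime q (p ^ r) := ((Nat.coprime_primes hq hp).mpr hqp).pow_right r
  -- an element `z ∈ ⟨c⟩` of order `q * |y|` lies above `y`, hence is comparable with `t`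
  obtain ⟨z, hz, hzord⟩ := exists_mem_zpowers_orderOf_eq
    ((hcop.coprime_dvd_right hy).mul_dvd_of_dvd_of_dvd hqc (orderOf_dvd_of_mem_zpowers hyc))
  have hyz : y ∈ zpowers z := mem_zpowers_of_orderOf_dvd hyc hz (hzord ▸ dvd_mul_left _ _)
  have hzt : z ∈ pclosedNbhd t := hN ▸ Or.inl (zpowers_le.mpr hyz)
  rcases hzt with h | h
  · have hdvd := orderOf_dvd_of_mem_zpowers (h (mem_zpowers t))
    rw [hzord, ← hpr] at hdvd
    exact hylt.not_ge (Nat.le_of_dvd (orderOf_pos y) (hcop.symm.dvd_of_dvd_mul_left hdvd))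
  · have hdvd := orderOf_dvd_of_mem_zpowers (h (mem_zpowers z))
    rw [hzord, ← hpr] at hdvd
    exact hqp ((Nat.prime_dvd_prime_iff_eq hq hp).mp
      (hq.dvd_of_dvd_pow (dvd_of_mul_right_dvd hdvd)))

theorem totient_orderOf_le_ncard_twinClass (c : G) :
    (orderOf c).totient ≤ (twinClass c).ncard := by
  rw [← ncard_setOf_zpowers_eq]
  exact Set.ncard_le_ncard (fun y hy ↦ pclosedNbhd_congr hy) (Set.toFinite _)

theorem Ncount_le_of_mem_zpowers (hnc : ¬ IsCyclic G) {a c : G} (ha : a ∈ zpowers c) :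
    Ncount a ≤ Ncount c := by
  rw [Ncount_eq_ncard_twinClass, Ncount_eq_ncard_twinClass]
  by_cases hN : pclosedNbhd a = pclosedNbhd c
  · simp only [twinClass, hN, le_refl]
  obtain ⟨t, ht⟩ := (Set.toFinite (twinClass a)).exists_maximalFor orderOf _ ⟨a, rfl⟩
  have hta : pclosedNbhd t = pclosedNbhd a := ht.prop
  have hsub := twinClass_subset_zpowers ht
  have htc : zpowers t < zpowers c := by
    have hct : c ∈ pclosedNbhd t := hta ▸ Or.inl (zpowers_le.mpr ha)
    rcases hct with h | h
    · exact h.lt_of_ne fun e ↦ hN (hta ▸ pclosedNbhd_congr e)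
    · exact absurd (pclosedNbhd_eq_of_zpowers_le_of_le hnc hta.symm (zpowers_le.mpr ha) h).symm hN
  have htc_dvd : orderOf t ∣ orderOf c := orderOf_dvd_of_mem_zpowers (zpowers_le.mp htc.le)
  refine le_trans ?_ (totient_orderOf_le_ncard_twinClass c)
  by_cases hgen : ∀ y ∈ twinClass a, zpowers y = zpowers t
  · calc (twinClass a).ncard ≤ {y | zpowers y = zpowers t}.ncard :=
          Set.ncard_le_ncard hgen (Set.toFinite _)
      _ = (orderOf t).totient := ncard_setOf_zpowers_eq t
      _ ≤ (orderOf c).totient :=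
          Nat.le_of_dvd (Nat.totient_pos.mpr (orderOf_pos c)) (Nat.totient_dvd_of_dvd htc_dvd)
  · push Not at hgen
    obtain ⟨y, hy, hyt⟩ := hgen
    have hyt' : zpowers y < zpowers t := (zpowers_le.mpr (hsub hy)).lt_of_ne hyt
    calc (twinClass a).ncard ≤ (zpowers t : Set G).ncard := Set.ncard_le_ncard hsub (Set.toFinite _)
      _ = orderOf t := by rw [← Nat.card_coe_set_eq, SetLike.coe_sort_coe, Nat.card_zpowers]
      _ ≤ (orderOf c).totient :=
          Nat.le_totient_of_dvd_of_lt (isPrimePow_orderOf_of_zpowers_le hnc (hy.trans hta.symm)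
            hyt' htc.le) htc_dvd (orderOf_lt_orderOf_of_zpowers_lt htc)

end Finite

theorem padj_of_mem_zpowers {x c : G} (hx : x ∈ zpowers c) (hne : c ≠ x) : padj x c :=
  ⟨Ne.symm hne, Or.inl (zpowers_le.mpr hx)⟩

end PowerGraph

theorem stmt17_general {G : Type*} [Group G] [Finite G] (hnc : ¬ IsCyclic G)
    (a b c : G)
    (ha : a ∈ Subgroup.zpowers c) (hb : b ∈ Subgroup.zpowers c) :
    max (Ncount a) (Ncount b) ≤ Ncount c ∧
      (c ≠ a → padj a c) ∧ (c ≠ b → padj b c) :=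
  ⟨max_le (Ncount_le_of_mem_zpowers hnc ha) (Ncount_le_of_mem_zpowers hnc hb),
    padj_of_mem_zpowers ha, padj_of_mem_zpowers hb⟩

theorem stmt17 {G : Type*} [Group G] [Finite G] (hnc : ¬ IsCyclic G)
    (a b c : G) (hne : a ≠ b)
    (ha : a ∈ Subgroup.zpowers c) (hb : b ∈ Subgroup.zpowers c) :
    max (Ncount a) (Ncount b) ≤ Ncount c ∧
      (c ≠ a → padj a c) ∧ (c ≠ b → padj b c) :=
  stmt17_general hnc a b c ha hb
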